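/- arXiv:2103.05146 — 6 statements merged into one kernel-verified Lean document; each statement's English description precedes it below -/
import Mathlib

section
/- Let t ≥ 1 and let G be an n-vertex t-tough graph, and let C be a non-Hamiltonian cycle of G. If a vertex x ∈ V(G) \ V(C) has more than n/(t+1) − 1 neighbors on C, then G has a cycle C' with V(C') = V(C) ∪ {x}. -/
open SimpleGraph

/-- The number of components of `G − S`. -/
noncomputable def numComp {V : Type*} (G : SimpleGraph V) (S : Set V) : ℕ :=
  Nat.card ((G.induce Sᶜ).ConnectedComponent)

/-- `G` is `t`-tough: `|S| ≥ t · c(G − S)` for every `S` with `c(G − S) ≥ 2`. -/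
def Tough {V : Type*} [Fintype V] (t : ℝ) (G : SimpleGraph V) : Prop :=
  ∀ S : Finset V, 2 ≤ numComp G ↑S → t * (numComp G ↑S : ℝ) ≤ (S.card : ℝ)

/-!
Suppose `C` cannot be extended through `x`, let `N` be the set of neighbours of `x` on `C`,
and write `y⁺` for the successor of `y` on `C`. If `x ~ y⁺` for some `y ∈ N`, then `x` can
be inserted between `y` and `y⁺`. If `y⁺ ~ z⁺` for distinct `y, z ∈ N`, then
`x y ⋯ z⁺ y⁺ ⋯ z x` is a cycle on `V(C) ∪ {x}` (a Pósa rotation of the path `C - yy⁺`).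
Hence `{x} ∪ N⁺` is an independent set of size `|N| + 1` (take `{x, v}` for a vertex `v`
of `C` when `N = ∅`). Deleting the complement of an independent set `I` with `|I| ≥ 2`
leaves `|I|` components, so toughness gives `(t + 1)|I| ≤ n`, contradicting the degree
bound.
-/

namespace SimpleGraph
variable {V : Type*} {G : SimpleGraph V}
open Finset

lemma numComp_compl_of_isIndepSet {s : Set V} (hs : G.IsIndepSet s) :
    numComp G sᶜ = Nat.card s := by
  unfold numComp
  rw [compl_compl]
  refine (Nat.card_eq_of_bijective _ ⟨fun a b hab => ?_, Quot.mk_surjective⟩).symm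
  obtain ⟨p⟩ := ConnectedComponent.eq.mp hab
  cases p with
  | nil => rfl
  | cons h _ => exact absurd h (hs a.2 (Subtype.coe_prop _) (Subtype.coe_ne_coe.mpr h.ne))

lemma Tough.add_one_mul_card_le_of_isIndepSet [Fintype V] {t : ℝ} (hG : Tough t G)
    {I : Finset V} (hI : G.IsIndepSet I) (hI2 : 2 ≤ #I) :
    (t + 1) * #I ≤ Fintype.card V := by
  classical
  have hcomp : numComp G ↑Iᶜ = #I := by
    rw [coe_compl, numComp_compl_of_isIndepSet hI, Nat.card_coe_set_eq, Set.ncard_coe_finset]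
  have h := hG Iᶜ (hcomp ▸ hI2)
  rw [hcomp, card_compl, Nat.cast_sub I.card_le_univ] at h
  linarith

namespace Walk
variable [DecidableEq V]

lemma IsPath.exists_isCycle_support_toFinset_eq_insert {a b x : V} {p : G.Walk a b}
    (hp : p.IsPath) (hab : a ≠ b) (hx : x ∉ p.support) (ha : G.Adj x a) (hb : G.Adj x b) :
    ∃ (w : V) (c : G.Walk w w), c.IsCycle ∧
      c.support.toFinset = insert x p.support.toFinset := by
  refine ⟨b, cons hb.symm (cons ha p), ?_, ?_⟩
  · rw [cons_isCycle_iff, cons_isPath_iff, edges_cons, List.mem_cons, Sym2.eq_swap, Sym2.eq_iff]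
    refine ⟨⟨hp, hx⟩, ?_⟩
    rintro ((⟨-, rfl⟩ | ⟨rfl, -⟩) | h)
    · exact hab rfl
    · exact ha.ne rfl
    · exact hx (p.fst_mem_support_of_mem_edges h)
  · simp [p.end_mem_support]

/-- Pósa rotation: if `q = A ++ (z, z⁺) ++ B` and `s ~ z⁺`, then `B⁻¹ ++ (z⁺, s) ++ A` is a
path. -/
lemma IsPath.exists_isPath_of_adj_snd_dropUntil {s y z : V} {q : G.Walk s y} (hq : q.IsPath)
    (hz : z ∈ q.support) (hzy : z ≠ y) (hs : G.Adj s (q.dropUntil z hz).snd) :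
    ∃ p : G.Walk y z, p.IsPath ∧ p.support.toFinset = q.support.toFinset := by
  obtain ⟨s', hzs', B, hD⟩ := not_nil_iff.mp (not_nil_of_ne hzy : ¬ (q.dropUntil z hz).Nil)
  rw [hD, snd_cons] at hs
  let p := B.reverse.append (cons hs.symm (q.takeUntil z hz))
  have hperm : p.support.Perm q.support := by
    conv_rhs => rw [← q.take_spec hz, hD]
    simp only [p, support_append, support_reverse, support_cons, List.tail_cons]
    exact List.perm_append_comm.trans (List.Perm.append_left _ (List.reverse_perm _))
  exact ⟨p, isPath_def _ |>.mpr (hperm.nodup_iff.mpr hq.support_nodup),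
    List.toFinset_eq_of_perm _ _ hperm⟩

/-- The vertex following `y` on the closed walk `c`; the value at `y ∉ c.support` is junk. -/
noncomputable def nextVert {v : V} (c : G.Walk v v) (y : V) : V :=
  if h : y ∈ c.support then (c.rotate y h).snd else y

variable {v x y z : V} {c : G.Walk v v}

lemma nextVert_of_mem (hy : y ∈ c.support) : c.nextVert y = (c.rotate y hy).snd := dif_pos hy

lemma IsCycle.exists_dart_nextVert (hc : c.IsCycle) (hy : y ∈ c.support) :
    ∃ d ∈ c.darts, d.fst = y ∧ d.snd = c.nextVert y :=
  ⟨_, (c.rotate_darts y hy).mem_iff.mp (firstDart_mem_darts (hc.rotate hy).not_nil), rfl,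
    (nextVert_of_mem hy).symm⟩

lemma IsCycle.adj_nextVert (hc : c.IsCycle) (hy : y ∈ c.support) : G.Adj y (c.nextVert y) := by
  obtain ⟨d, -, rfl, hd⟩ := hc.exists_dart_nextVert hy
  exact hd ▸ d.adj

lemma IsCycle.nextVert_mem_support (hc : c.IsCycle) (hy : y ∈ c.support) :
    c.nextVert y ∈ c.support := by
  obtain ⟨d, hd, -, hsnd⟩ := hc.exists_dart_nextVert hy
  exact hsnd ▸ c.dart_snd_mem_support_of_mem_darts hd

lemma IsCycle.injOn_nextVert (hc : c.IsCycle) : Set.InjOn c.nextVert {y | y ∈ c.support} := by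
  intro y hy z hz hyz
  obtain ⟨d, hd, rfl, hdy⟩ := hc.exists_dart_nextVert hy
  obtain ⟨d', hd', rfl, hdz⟩ := hc.exists_dart_nextVert hz
  have hnodup : (c.darts.map (·.snd)).Nodup := c.map_snd_darts ▸ hc.support_nodup
  rw [List.inj_on_of_nodup_map hnodup hd hd' (hdy.trans (hyz.trans hdz.symm))]

lemma IsCycle.nextVert_fst_eq_snd (hc : c.IsCycle) {d : G.Dart} (hd : d ∈ c.darts) :
    c.nextVert d.fst = d.snd := by
  obtain ⟨d', hd', hfst, hsnd⟩ :=
    hc.exists_dart_nextVert (c.dart_fst_mem_support_of_mem_darts hd)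
  have hnodup : (c.darts.map (·.fst)).Nodup :=
    c.map_fst_darts ▸ (c.tail_support_perm_dropLast_support).nodup_iff.mp hc.support_nodup
  rw [← hsnd, List.inj_on_of_nodup_map hnodup hd' hd hfst]

lemma IsCycle.exists_isPath_nextVert (hc : c.IsCycle) (hy : y ∈ c.support) :
    ∃ p : G.Walk (c.nextVert y) y,
      p.IsPath ∧ p.support.toFinset = c.support.toFinset ∧ p.darts ⊆ c.darts := by
  have hrot := (hc.rotate hy).not_nil
  rw [nextVert_of_mem hy]
  refine ⟨(c.rotate y hy).tail, (hc.rotate hy).isPath_tail, ?_, ?_⟩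
  · ext w
    rw [List.mem_toFinset, List.mem_toFinset, ← c.mem_support_rotate_iff y hy,
      ← cons_support_tail hrot, List.mem_cons, iff_or_self]
    rintro rfl
    exact (support_tail_of_not_nil _ hrot).symm ▸ end_mem_tail_support hrot
  · rw [darts_tail]
    exact fun d hd => (c.rotate_darts y hy).mem_iff.mp (List.mem_of_mem_tail hd)

def IsExtendableBy (c : G.Walk v v) (x : V) : Prop :=
  ∃ (w : V) (c' : G.Walk w w), c'.IsCycle ∧ c'.support.toFinset = insert x c.support.toFinset

lemma IsCycle.isExtendableBy_of_adj_nextVert (hc : c.IsCycle) (hx : x ∉ c.support)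
    (hy : y ∈ c.support) (hxy : G.Adj x y) (hxy' : G.Adj x (c.nextVert y)) :
    c.IsExtendableBy x := by
  obtain ⟨p, hp, hps, -⟩ := hc.exists_isPath_nextVert hy
  have hxp : x ∉ p.support := by rwa [← List.mem_toFinset, hps, List.mem_toFinset]
  rw [IsExtendableBy, ← hps]
  exact hp.exists_isCycle_support_toFinset_eq_insert (hc.adj_nextVert hy).ne.symm hxp hxy' hxy

lemma IsCycle.isExtendableBy_of_adj_nextVert_nextVert (hc : c.IsCycle) (hx : x ∉ c.support)
    (hy : y ∈ c.support) (hz : z ∈ c.support) (hzy : z ≠ y)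
    (hxy : G.Adj x y) (hxz : G.Adj x z)
    (hyz : G.Adj (c.nextVert y) (c.nextVert z)) :
    c.IsExtendableBy x := by
  obtain ⟨q, hq, hqs, hqd⟩ := hc.exists_isPath_nextVert hy
  have hzq : z ∈ q.support := by rwa [← List.mem_toFinset, hqs, List.mem_toFinset]
  have hsnd : (q.dropUntil z hzq).snd = c.nextVert z :=
    (hc.nextVert_fst_eq_snd <| hqd <| q.darts_dropUntil_subset_darts hzq <|
      firstDart_mem_darts (not_nil_of_ne hzy)).symm
  obtain ⟨p, hp, hps⟩ := hq.exists_isPath_of_adj_snd_dropUntil hzq hzy (hsnd ▸ hyz)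
  have hxp : x ∉ p.support := by rwa [← List.mem_toFinset, hps, hqs, List.mem_toFinset]
  rw [IsExtendableBy, ← hqs, ← hps]
  exact hp.exists_isCycle_support_toFinset_eq_insert hzy.symm hxp hxy hxz

lemma IsCycle.isIndepSet_insert_image_nextVert (hc : c.IsCycle) (hx : x ∉ c.support)
    (hext : ¬ c.IsExtendableBy x)
    {N : Finset V} (hN : ∀ y ∈ N, y ∈ c.support ∧ G.Adj x y) :
    G.IsIndepSet ↑(insert x (N.image c.nextVert)) := by
  intro a ha b hb hab hadj
  simp only [coe_insert, coe_image, Set.mem_insert_iff, Set.mem_image, mem_coe] at ha hb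
  rcases ha with rfl | ⟨y, hy, rfl⟩ <;> rcases hb with rfl | ⟨z, hz, rfl⟩
  · exact hab rfl
  · exact hext (hc.isExtendableBy_of_adj_nextVert hx (hN z hz).1 (hN z hz).2 hadj)
  · exact hext (hc.isExtendableBy_of_adj_nextVert hx (hN y hy).1 (hN y hy).2 hadj.symm)
  · have hzy : z ≠ y := by rintro rfl; exact hab rfl
    exact hext (hc.isExtendableBy_of_adj_nextVert_nextVert hx (hN y hy).1 (hN z hz).1 hzy
      (hN y hy).2 (hN z hz).2 hadj)

lemma IsCycle.card_insert_image_nextVert (hc : c.IsCycle) (hx : x ∉ c.support)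
    {N : Finset V} (hN : ∀ y ∈ N, y ∈ c.support) :
    #(insert x (N.image c.nextVert)) = #N + 1 := by
  have hxN : x ∉ N.image c.nextVert := by
    simp only [mem_image, not_exists, not_and]
    exact fun y hy hyx => hx (hyx ▸ hc.nextVert_mem_support (hN y hy))
  rw [card_insert_of_notMem hxN, card_image_of_injOn (hc.injOn_nextVert.mono hN)]

lemma IsCycle.exists_isIndepSet_card_ge [DecidableRel G.Adj] (hc : c.IsCycle)
    (hx : x ∉ c.support) (hext : ¬ c.IsExtendableBy x) :
    ∃ I : Finset V, G.IsIndepSet ↑I ∧ 2 ≤ #I ∧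
      #(c.support.toFinset.filter (G.Adj x)) + 1 ≤ #I := by
  set N := c.support.toFinset.filter (G.Adj x)
  have hN : ∀ y ∈ N, y ∈ c.support ∧ G.Adj x y := by simp [N]
  rcases N.eq_empty_or_nonempty with hN0 | hN0
  · have hxv : x ≠ v := fun h => hx (h ▸ c.start_mem_support)
    have hnadj : ¬ G.Adj x v := fun h =>
      notMem_empty v (hN0 ▸ mem_filter.mpr ⟨List.mem_toFinset.mpr c.start_mem_support, h⟩)
    refine ⟨{x, v}, ?_, (card_pair hxv).ge, by simp [hN0, card_pair hxv]⟩
    rw [coe_pair, ← isClique_compl]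
    exact isClique_pair.mpr fun _ => (compl_adj G x v).mpr ⟨hxv, hnadj⟩
  · refine ⟨_, hc.isIndepSet_insert_image_nextVert hx hext hN, ?_, ?_⟩ <;>
      rw [hc.card_insert_image_nextVert hx fun y hy => (hN y hy).1]
    exact Nat.succ_le_succ hN0.card_pos

end Walk
end SimpleGraph

theorem cycle_extension_general {V : Type*} [Fintype V] [DecidableEq V] (t : ℝ) (ht : 1 ≤ t)
    (G : SimpleGraph V) (htough : Tough t G)
    (v0 : V) (c : G.Walk v0 v0) (hcyc : c.IsCycle)
    (x : V) (hx : x ∉ c.support)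
    (hdeg : (Fintype.card V : ℝ) / (t + 1) - 1 <
      (Nat.card {y : V | y ∈ c.support ∧ G.Adj x y} : ℝ)) :
    ∃ (w : V) (c' : G.Walk w w), c'.IsCycle ∧
      c'.support.toFinset = insert x c.support.toFinset := by
  classical
  by_contra hext
  change ¬ c.IsExtendableBy x at hext
  obtain ⟨I, hI, hI2, hNI⟩ := hcyc.exists_isIndepSet_card_ge hx hext
  set N := c.support.toFinset.filter (G.Adj x)
  have hN : Nat.card {y : V | y ∈ c.support ∧ G.Adj x y} = N.card := by
    rw [← Set.ncard_coe_finset, ← Nat.card_coe_set_eq, Finset.coe_filter]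
    simp only [List.mem_toFinset]
  have ht1 : (0 : ℝ) < t + 1 := by linarith
  have hNI' : (N.card : ℝ) + 1 ≤ I.card := by exact_mod_cast hNI
  have hbound : (t + 1) * (N.card + 1) ≤ Fintype.card V :=
    (mul_le_mul_of_nonneg_left hNI' ht1.le).trans
      (htough.add_one_mul_card_le_of_isIndepSet hI hI2)
  rw [hN, sub_lt_iff_lt_add, div_lt_iff₀ ht1] at hdeg
  linarith

/-- Cycle extension lemma: if a vertex off a non-hamiltonian cycle has more than
n/(t+1) − 1 neighbors on the cycle, the cycle can be extended through it. -/
theorem cycle_extension {V : Type*} [Fintype V] [DecidableEq V] (t : ℝ) (ht : 1 ≤ t)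
    (G : SimpleGraph V) (htough : Tough t G)
    (v0 : V) (c : G.Walk v0 v0) (hcyc : c.IsCycle)
    (hnonham : c.support.toFinset ≠ Finset.univ)
    (x : V) (hx : x ∉ c.support)
    (hdeg : (Fintype.card V : ℝ) / (t + 1) - 1 <
      (Nat.card {y : V | y ∈ c.support ∧ G.Adj x y} : ℝ)) :
    ∃ (w : V) (c' : G.Walk w w), c'.IsCycle ∧
      c'.support.toFinset = insert x c.support.toFinset :=
  cycle_extension_general t ht G htough v0 c hcyc x hx hdeg
end

section
/- Every graph G on n ≥ 3 vertices in which every pair of nonadjacent vertices u, v satisfies d(u) + d(v) ≥ n is Hamiltonian. -/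
open SimpleGraph

/-- The degree of a vertex. -/
noncomputable def deg {V : Type*} [Fintype V] (G : SimpleGraph V) (v : V) : ℕ :=
  Nat.card (G.neighborSet v)

/-!
If `x` and `y` are non-adjacent with `d(x) + d(y) ≥ n` and `G + xy` has a Hamiltonian cycle, then
so does `G`: either the cycle avoids `xy`, or deleting `xy` leaves a Hamiltonian path
`x = v₀, v₁, …, vₙ₋₁ = y` of `G`. The sets `{i | x ~ vᵢ₊₁}` and `{i | y ~ vᵢ}` lie in
`{0, …, n - 2}` and have sizes `d(x)` and `d(y)`, so they meet in some `i`, and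
`v₀ … vᵢ vₙ₋₁ vₙ₋₂ … vᵢ₊₁ v₀` is a Hamiltonian cycle of `G`. Since Ore's condition is preserved
by adding edges, downward induction on `G` reduces the theorem to the complete graph.
-/

open Finset

namespace Fin

variable {n : ℕ}

lemma last_eq_neg_one : Fin.last n = -1 :=
  eq_neg_of_add_eq_zero_left (last_add_one n)

lemma sym2_apply_add_one_inj {V : Type*} {f : Fin (n + 1) → V} (hf : Function.Injective f)
    (hn : 2 ≤ n) {a b : Fin (n + 1)} : s(f a, f (a + 1)) = s(f b, f (b + 1)) ↔ a = b := by
  refine ⟨fun h => ?_, fun h => h ▸ rfl⟩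
  simp only [Sym2.eq_iff, hf.eq_iff] at h
  rcases h with ⟨h, -⟩ | ⟨rfl, h⟩
  · exact h
  · rw [add_assoc, add_eq_left, Fin.ext_iff, val_add, val_one', val_zero,
      Nat.mod_eq_of_lt (a := 1) (by omega), Nat.mod_eq_of_lt (by omega)] at h
    omega

/-- Reverses the segment `k + 1, …, n`: modulo `n + 1`, `j ↦ k - j` maps it onto itself. -/
def reverseAfter (k : Fin (n + 1)) : Equiv.Perm (Fin (n + 1)) :=
  Function.Involutive.toPerm (fun j => if j ≤ k then j else k - j) fun j => by
    by_cases hj : j ≤ k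
    · simp [hj]
    · have hkj : ¬ k - j ≤ k := by
        rw [not_le] at hj ⊢
        rw [lt_def, coe_sub_iff_lt.mpr hj]
        have := j.is_lt
        omega
      simp [hj, hkj]

lemma reverseAfter_of_le {k j : Fin (n + 1)} (h : j ≤ k) : reverseAfter k j = j := if_pos h

lemma reverseAfter_of_lt {k j : Fin (n + 1)} (h : k < j) : reverseAfter k j = k - j :=
  if_neg h.not_ge

end Fin

namespace SimpleGraph

variable {V : Type*} {G : SimpleGraph V} {n : ℕ}

/-- The successor `j + 1` wraps around from `Fin.last n` to `0`. -/
def IsCycleEnum (G : SimpleGraph V) (f : Fin (n + 1) ≃ V) : Prop :=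
  ∀ j, G.Adj (f j) (f (j + 1))

def IsPathEnum (G : SimpleGraph V) (f : Fin (n + 1) ≃ V) : Prop :=
  ∀ j, j ≠ Fin.last n → G.Adj (f j) (f (j + 1))

lemma IsCycleEnum.sup_edge {x y : V} {f : Fin (n + 1) ≃ V}
    (hf : (G ⊔ edge x y).IsCycleEnum f) (hn : 2 ≤ n) :
    G.IsCycleEnum f ∨
      ∃ g : Fin (n + 1) ≃ V, G.IsPathEnum g ∧ s(g (Fin.last n), g 0) = s(x, y) := by
  rw [or_iff_not_imp_left]
  intro hG
  obtain ⟨i, hi⟩ : ∃ i, ¬ G.Adj (f i) (f (i + 1)) := by simpa [IsCycleEnum] using hG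
  have hxy : s(f i, f (i + 1)) = s(x, y) :=
    Sym2.eq_iff.mpr ((edge_adj ..).mp ((hf i).resolve_left hi)).1
  refine ⟨(Equiv.addRight (i + 1)).trans f, fun j hj => ?_, ?_⟩
  · simp only [Equiv.trans_apply, Equiv.coe_addRight]
    rw [add_right_comm j 1]
    refine (hf _).resolve_right fun hj' => hj ?_
    have h := Sym2.eq_iff.mpr ((edge_adj ..).mp hj').1
    rw [← hxy, Fin.sym2_apply_add_one_inj f.injective hn, ← add_assoc, add_right_comm,
      add_eq_right] at h
    rw [Fin.last_eq_neg_one, eq_neg_of_add_eq_zero_left h]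
  · simp only [Equiv.trans_apply, Equiv.coe_addRight, Fin.last_eq_neg_one, zero_add]
    rw [← hxy, show -1 + (i + 1) = i by abel]

lemma IsPathEnum.isCycleEnum_reverseAfter {f : Fin (n + 1) ≃ V} (hf : G.IsPathEnum f)
    {k : Fin (n + 1)} (hk : k ≠ Fin.last n) (h0 : G.Adj (f 0) (f (k + 1)))
    (hlast : G.Adj (f (Fin.last n)) (f k)) : G.IsCycleEnum ((Fin.reverseAfter k).trans f) := by
  intro j
  simp only [Equiv.trans_apply]
  rcases lt_trichotomy j k with hjk | rfl | hkj
  · rw [Fin.reverseAfter_of_le hjk.le, Fin.reverseAfter_of_le (Fin.add_one_le_of_lt hjk)]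
    exact hf j (Fin.ne_last_of_lt hjk)
  · rw [Fin.reverseAfter_of_le le_rfl,
      Fin.reverseAfter_of_lt (Fin.lt_add_one_iff.2 (Fin.lt_last_iff_ne_last.2 hk)),
      sub_add_cancel_left, ← Fin.last_eq_neg_one]
    exact hlast.symm
  · by_cases hj : j = Fin.last n
    · subst hj
      rw [Fin.last_add_one, Fin.reverseAfter_of_le (Fin.zero_le _), Fin.reverseAfter_of_lt hkj,
        Fin.last_eq_neg_one, sub_neg_eq_add]
      exact h0.symm
    · rw [Fin.reverseAfter_of_lt hkj,
        Fin.reverseAfter_of_lt (hkj.trans (Fin.lt_add_one_iff.2 (Fin.lt_last_iff_ne_last.2 hj)))]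
      have hne : k - (j + 1) ≠ Fin.last n := by
        rw [Fin.last_eq_neg_one, Ne, sub_eq_iff_eq_add, show -1 + (j + 1) = j by abel]
        exact hkj.ne
      have hedge := hf _ hne
      rw [show k - (j + 1) + 1 = k - j by abel] at hedge
      exact hedge.symm

lemma exists_adj_first_adj_last [Fintype V] [DecidableRel G.Adj] (f : Fin (n + 1) ≃ V)
    (hdeg : n < G.degree (f 0) + G.degree (f (Fin.last n))) :
    ∃ k, k ≠ Fin.last n ∧ G.Adj (f 0) (f (k + 1)) ∧ G.Adj (f (Fin.last n)) (f k) := by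
  let A : Finset (Fin (n + 1)) := {k | G.Adj (f 0) (f (k + 1))}
  let B : Finset (Fin (n + 1)) := {k | G.Adj (f (Fin.last n)) (f k)}
  have hA : #A = G.degree (f 0) := by
    rw [← card_neighborFinset_eq_degree]
    exact card_equiv ((Equiv.addRight 1).trans f) (by simp [A])
  have hB : #B = G.degree (f (Fin.last n)) := by
    rw [← card_neighborFinset_eq_degree]
    exact card_equiv f (by simp [B])
  have hAs : A ⊆ univ.erase (Fin.last n) := by
    intro k
    simp only [A, mem_filter, mem_univ, true_and, mem_erase, and_true]
    rintro h rfl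
    simp [Fin.last_add_one] at h
  have hBs : B ⊆ univ.erase (Fin.last n) := by
    intro k
    simp only [B, mem_filter, mem_univ, true_and, mem_erase, and_true]
    rintro h rfl
    exact G.irrefl h
  obtain ⟨k, hk⟩ := inter_nonempty_of_card_lt_card_add_card hAs hBs (by simp [hA, hB, hdeg])
  simp only [A, B, mem_inter, mem_filter, mem_univ, true_and] at hk
  exact ⟨k, (mem_erase.mp (hAs (by simpa [A] using hk.1))).1, hk⟩

section Fintype

variable [Fintype V]

lemma deg_eq_degree [DecidableRel G.Adj] (v : V) : deg G v = G.degree v := by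
  rw [deg, Nat.card_eq_fintype_card, card_neighborSet_eq_degree]

lemma deg_mono {H : SimpleGraph V} (h : G ≤ H) (v : V) : deg G v ≤ deg H v :=
  Nat.card_mono (Set.toFinite _) fun _ hw => h hw

variable [DecidableEq V]

lemma IsCycleEnum.isHamiltonian {f : Fin (n + 1) ≃ V} (hf : G.IsCycleEnum f) (hn : 2 ≤ n) :
    G.IsHamiltonian := by
  obtain ⟨m, rfl⟩ := Nat.exists_eq_add_of_le' hn
  let φ : cycleGraph (m + 3) →g G :=
    { toFun := f
      map_rel' := fun {u v} huv => by
        rcases cycleGraph_adj'.mp huv with h | h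
        · rw [← Fin.val_one (m + 1), ← Fin.ext_iff, sub_eq_iff_eq_add'] at h
          exact h ▸ (hf v).symm
        · rw [← Fin.val_one (m + 1), ← Fin.ext_iff, sub_eq_iff_eq_add'] at h
          exact h ▸ hf u }
  intro _
  refine ⟨f 0, (cycleGraph.cycle m).map φ, Walk.IsHamiltonianCycle.map f.bijective ?_⟩
  rw [Walk.isHamiltonianCycle_iff_isCycle_and_length_eq]
  exact ⟨cycleGraph.isCycle_cycle, by simp [cycleGraph.length_cycle]⟩

lemma IsHamiltonian.exists_isCycleEnum (hG : G.IsHamiltonian) (hV : Fintype.card V = n + 1)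
    (hn : 1 ≤ n) : ∃ f : Fin (n + 1) ≃ V, G.IsCycleEnum f := by
  obtain ⟨a, p, hp⟩ := hG (by omega)
  have hlen : p.tail.support.length = n + 1 := by rw [hp.isHamiltonian_tail.length_support, hV]
  have hlen' : p.tail.length = n := by rw [Walk.length_support] at hlen; omega
  refine ⟨(finCongr hlen.symm).trans hp.isHamiltonian_tail.getVertEquiv, fun j => ?_⟩
  simp only [Equiv.trans_apply, finCongr_apply, Walk.IsHamiltonian.getVertEquiv_apply,
    Function.comp_apply, Fin.val_cast]
  rw [Fin.val_add_one]
  split_ifs with hj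
  · subst hj
    rw [Walk.getVert_of_length_le _ (by simp [hlen']), Walk.getVert_zero]
    exact p.adj_snd hp.isCycle.not_nil
  · exact p.tail.adj_getVert_succ (by have := Fin.val_lt_last hj; omega)

lemma isHamiltonian_top (hV : 3 ≤ Fintype.card V) : (⊤ : SimpleGraph V).IsHamiltonian := by
  obtain ⟨n, hn⟩ := Nat.exists_eq_add_one_of_ne_zero (by omega : Fintype.card V ≠ 0)
  refine IsCycleEnum.isHamiltonian (f := (Fintype.equivFinOfCardEq hn).symm) (fun j => ?_)
    (by omega)
  rw [top_adj, Ne, Equiv.apply_eq_iff_eq, left_eq_add, Fin.one_eq_zero_iff]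
  omega

theorem IsHamiltonian.of_sup_edge {x y : V} (hV : 3 ≤ Fintype.card V)
    (hxy : Fintype.card V ≤ deg G x + deg G y) (hG : (G ⊔ edge x y).IsHamiltonian) :
    G.IsHamiltonian := by
  classical
  obtain ⟨n, hn⟩ := Nat.exists_eq_add_one_of_ne_zero (by omega : Fintype.card V ≠ 0)
  obtain ⟨f, hf⟩ := hG.exists_isCycleEnum hn (by omega)
  rcases hf.sup_edge (by omega) with hf | ⟨g, hg, hends⟩
  · exact hf.isHamiltonian (by omega)
  have hdeg : deg G (g (Fin.last n)) + deg G (g 0) = deg G x + deg G y := by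
    rcases Sym2.eq_iff.mp hends with ⟨h₁, h₂⟩ | ⟨h₁, h₂⟩ <;> rw [h₁, h₂]
    exact add_comm _ _
  obtain ⟨k, hk, h0, hlast⟩ := exists_adj_first_adj_last g (by
    rw [← deg_eq_degree (G := G), ← deg_eq_degree (G := G)]; omega)
  exact (hg.isCycleEnum_reverseAfter hk h0 hlast).isHamiltonian (by omega)

end Fintype

end SimpleGraph

/-- Ore's theorem. -/
theorem ore {V : Type*} [Fintype V] [DecidableEq V]
    (G : SimpleGraph V) (hn : 3 ≤ Fintype.card V)
    (hσ : ∀ u v : V, u ≠ v → ¬ G.Adj u v → Fintype.card V ≤ deg G u + deg G v) :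
    G.IsHamiltonian := by
  induction G using WellFoundedGT.induction with
  | _ G ih =>
  obtain rfl | hG := eq_or_ne G ⊤
  · exact isHamiltonian_top hn
  obtain ⟨x, y, hxy, hnadj⟩ := ne_top_iff_exists_not_adj.mp hG
  have hlt : G < G ⊔ edge x y :=
    left_lt_sup.mpr fun h => hnadj (((edge_le_iff G).mp h).resolve_left hxy)
  refine IsHamiltonian.of_sup_edge hn (hσ x y hxy hnadj) (ih _ hlt fun u v huv hnadj' => ?_)
  calc Fintype.card V ≤ deg G u + deg G v := hσ u v huv fun h => hnadj' (Or.inl h)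
    _ ≤ _ := add_le_add (deg_mono le_sup_left u) (deg_mono le_sup_left v)
end

section
/- For every odd integer n ≥ 3, the complete bipartite graph K_{(n−1)/2, (n+1)/2} is (n−1)/(n+1)-tough, satisfies σ₂ = n − 1 = 2n/(1 + (n−1)/(n+1)) − 2, and is not Hamiltonian. -/
open SimpleGraph

lemma aux_numComp_bot {V : Type*} (G : SimpleGraph V) (S : Set V)
    (h : ∀ x y : ↥Sᶜ, ¬ (G.induce Sᶜ).Adj x y) :
    numComp G S = Nat.card ↥Sᶜ := by
  have hbot : G.induce Sᶜ = ⊥ := by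
    ext x y
    simp only [SimpleGraph.bot_adj, iff_false]
    exact h x y
  unfold numComp
  rw [hbot]
  refine (Nat.card_eq_of_bijective (⊥ : SimpleGraph ↥Sᶜ).connectedComponentMk ⟨?_, ?_⟩).symm
  · intro x y hxy
    exact (SimpleGraph.reachable_bot).mp ((SimpleGraph.ConnectedComponent.eq).mp hxy)
  · exact fun c => c.exists_rep

lemma aux_numComp_connected {V : Type*} (G : SimpleGraph V) (S : Set V)
    (h : (G.induce Sᶜ).Preconnected) :
    numComp G S ≤ 1 := by
  have hsub : Subsingleton ((G.induce Sᶜ).ConnectedComponent) := by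
    constructor
    intro c d
    induction c using SimpleGraph.ConnectedComponent.ind with
    | _ x =>
    induction d using SimpleGraph.ConnectedComponent.ind with
    | _ y =>
    exact SimpleGraph.ConnectedComponent.sound (h x y)
  have : Finite ((G.induce Sᶜ).ConnectedComponent) := Finite.of_subsingleton
  exact Finite.card_le_one_iff_subsingleton.mpr hsub

/-- Parity of walks in a complete bipartite graph. -/
lemma aux_walk_parity {A B : Type*} {u v : A ⊕ B}
    (p : (completeBipartiteGraph A B).Walk u v) :
    Even p.length ↔ (u.isLeft = v.isLeft) := by
  induction p with
  | nil => simp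
  | @cons a b c h q ih =>
    have hab : a.isLeft ≠ b.isLeft := by
      rcases h with ⟨h1, h2⟩ | ⟨h1, h2⟩ <;> cases a <;> cases b <;> simp_all
    rw [SimpleGraph.Walk.length_cons, Nat.even_add_one, ih]
    cases a <;> cases b <;> cases c <;> simp_all

/-- For odd n ≥ 3, the complete bipartite graph K_{(n−1)/2,(n+1)/2} is
(n−1)/(n+1)-tough, has σ₂ = n − 1 = 2n/(1+(n−1)/(n+1)) − 2, and is not
hamiltonian. -/
theorem completeBipartite_extremal (n : ℕ) (hodd : Odd n) (hn : 3 ≤ n) :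
    ∀ G : SimpleGraph (Fin ((n - 1) / 2) ⊕ Fin ((n + 1) / 2)),
    G = completeBipartiteGraph (Fin ((n - 1) / 2)) (Fin ((n + 1) / 2)) →
      Tough (((n : ℝ) - 1) / ((n : ℝ) + 1)) G ∧
      (∀ u v, u ≠ v → ¬ G.Adj u v →
        (n : ℝ) - 1 ≤ (deg G u : ℝ) + (deg G v : ℝ)) ∧
      (∃ u v, u ≠ v ∧ ¬ G.Adj u v ∧ (deg G u : ℝ) + (deg G v : ℝ) = (n : ℝ) - 1) ∧
      ((n : ℝ) - 1 = 2 * (n : ℝ) / (1 + ((n : ℝ) - 1) / ((n : ℝ) + 1)) - 2) ∧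
      ¬ G.IsHamiltonian := by
  obtain ⟨A, hA⟩ := hodd
  have hA1 : 1 ≤ A := by omega
  have h1 : (n - 1) / 2 = A := by omega
  have h2 : (n + 1) / 2 = A + 1 := by omega
  rw [h1, h2]
  intro G hG
  subst hG
  set V := Fin A ⊕ Fin (A + 1) with hV
  have hnR : (n : ℝ) = 2 * A + 1 := by
    rw [hA]; push_cast; ring
  have hcardV : Fintype.card V = 2 * A + 1 := by
    simp [hV]; omega
  -- degrees
  have hdegL : ∀ i : Fin A, deg (completeBipartiteGraph (Fin A) (Fin (A+1))) (Sum.inl i) = A + 1 := by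
    intro i
    have hset : (completeBipartiteGraph (Fin A) (Fin (A+1))).neighborSet (Sum.inl i)
        = Set.range (Sum.inr : Fin (A+1) → V) := by
      ext x
      cases x <;> simp [SimpleGraph.neighborSet]
    rw [deg, hset, Nat.card_range_of_injective Sum.inr_injective]
    simp
  have hdegR : ∀ j : Fin (A+1), deg (completeBipartiteGraph (Fin A) (Fin (A+1))) (Sum.inr j) = A := by
    intro j
    have hset : (completeBipartiteGraph (Fin A) (Fin (A+1))).neighborSet (Sum.inr j)
        = Set.range (Sum.inl : Fin A → V) := by
      ext x
      cases x <;> simp [SimpleGraph.neighborSet]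
    rw [deg, hset, Nat.card_range_of_injective Sum.inl_injective]
    simp
  refine ⟨?_, ?_, ?_, ?_, ?_⟩
  · -- toughness
    intro S hS
    set G := completeBipartiteGraph (Fin A) (Fin (A+1)) with hGdef
    set T : Set V := (↑S : Set V)ᶜ with hT
    by_cases hLR : (∃ x : ↥T, (x : V).isLeft) ∧ (∃ x : ↥T, (x : V).isRight)
    · -- both sides survive: connected, contradiction
      exfalso
      obtain ⟨⟨x, hx⟩, ⟨y, hy⟩⟩ := hLR
      have hadj : ∀ (a b : ↥T), (a : V).isLeft → (b : V).isRight → (G.induce T).Adj a b := by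
        intro a b ha hb
        simp only [SimpleGraph.comap_adj, hGdef, completeBipartiteGraph_adj]
        left; exact ⟨ha, hb⟩
      have hpre : (G.induce T).Preconnected := by
        rintro ⟨(i | i), hi⟩ ⟨(j | j), hj⟩
        · exact ((hadj ⟨Sum.inl i, hi⟩ y rfl hy).reachable.trans
            (hadj ⟨Sum.inl j, hj⟩ y rfl hy).reachable.symm)
        · exact (hadj ⟨Sum.inl i, hi⟩ ⟨Sum.inr j, hj⟩ rfl rfl).reachable
        · exact (hadj ⟨Sum.inl j, hj⟩ ⟨Sum.inr i, hi⟩ rfl rfl).reachable.symm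
        · exact ((hadj x ⟨Sum.inr i, hi⟩ hx rfl).reachable.symm.trans
            (hadj x ⟨Sum.inr j, hj⟩ hx rfl).reachable)
      have := aux_numComp_connected G (↑S) hpre
      omega
    · -- all survivors on one side
      have hone : ∀ x y : ↥T, ¬ (G.induce T).Adj x y := by
        intro a b hab
        simp only [SimpleGraph.comap_adj, hGdef, completeBipartiteGraph_adj] at hab
        push_neg at hLR
        rcases hab with ⟨h1', h2'⟩ | ⟨h1', h2'⟩
        · rcases Classical.em (∃ x : ↥T, (x : V).isLeft) with h | h
          · exact absurd h2' (by simpa using (hLR h b))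
          · exact h ⟨a, h1'⟩
        · rcases Classical.em (∃ x : ↥T, (x : V).isLeft) with h | h
          · exact absurd h1' (by simpa using (hLR h a))
          · exact h ⟨b, h2'⟩
      have hc : numComp G ↑S = Nat.card ↥T := aux_numComp_bot G ↑S hone
      -- bound: card T ≤ A + 1
      have hTsub : T ⊆ Set.range (Sum.inl : Fin A → V) ∨ T ⊆ Set.range (Sum.inr : Fin (A+1) → V) := by
        push_neg at hLR
        rcases Classical.em (∃ x : ↥T, (x : V).isLeft) with h | h
        · left
          intro v hv
          have := hLR h ⟨v, hv⟩
          cases v with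
          | inl a => exact ⟨a, rfl⟩
          | inr b => simp at this
        · right
          intro v hv
          cases v with
          | inl a => exact absurd ⟨⟨Sum.inl a, hv⟩, rfl⟩ h
          | inr b => exact ⟨b, rfl⟩
      have hcard_le : Nat.card ↥T ≤ A + 1 := by
        rw [Nat.card_coe_set_eq]
        rcases hTsub with h | h
        · calc T.ncard ≤ (Set.range (Sum.inl : Fin A → V)).ncard :=
                Set.ncard_le_ncard h (Set.toFinite _)
            _ = A := by
                rw [← Nat.card_coe_set_eq, Nat.card_range_of_injective Sum.inl_injective]
                simp
            _ ≤ A + 1 := Nat.le_succ A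
        · calc T.ncard ≤ (Set.range (Sum.inr : Fin (A+1) → V)).ncard :=
                Set.ncard_le_ncard h (Set.toFinite _)
            _ = A + 1 := by
                rw [← Nat.card_coe_set_eq, Nat.card_range_of_injective Sum.inr_injective]
                simp
      have hcount : Nat.card ↥T + S.card = 2 * A + 1 := by
        have h3 : (↑S : Set V).ncard + T.ncard = Nat.card V := by
          rw [hT]; exact Set.ncard_add_ncard_compl _
        rw [Set.ncard_coe_finset, Nat.card_eq_fintype_card, hcardV] at h3
        rw [Nat.card_coe_set_eq]
        omega
      rw [hc] at hS ⊢
      set c := Nat.card ↥T with hcdef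
      have hScard : (S.card : ℝ) = 2 * A + 1 - c := by
        have : (c : ℝ) + S.card = 2 * A + 1 := by exact_mod_cast congrArg Nat.cast hcount
        linarith
      have hcR : (c : ℝ) ≤ A + 1 := by exact_mod_cast hcard_le
      rw [hnR, hScard, div_mul_eq_mul_div, div_le_iff₀ (by positivity)]
      have hc0 : (0:ℝ) ≤ c := Nat.cast_nonneg c
      nlinarith [hcR, hc0]
  · -- sigma2 lower bound
    intro u v huv hadj
    cases u with
    | inl i =>
      cases v with
      | inl j =>
        rw [hdegL i, hdegL j, hnR]; push_cast; linarith
      | inr j => exact absurd (by simp [completeBipartiteGraph_adj]) hadj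
    | inr i =>
      cases v with
      | inl j => exact absurd (by simp [completeBipartiteGraph_adj]) hadj
      | inr j =>
        rw [hdegR i, hdegR j, hnR]; push_cast; linarith
  · -- sigma2 attained
    refine ⟨Sum.inr ⟨0, by omega⟩, Sum.inr ⟨1, by omega⟩, by simp [Fin.ext_iff], by
      simp [completeBipartiteGraph_adj], ?_⟩
    rw [hdegR, hdegR, hnR]; push_cast; ring
  · -- algebraic identity
    have hpos : (n : ℝ) + 1 ≠ 0 := by rw [hnR]; positivity
    have hn0 : (n : ℝ) ≠ 0 := by rw [hnR]; positivity
    have hden : 1 + ((n : ℝ) - 1) / ((n : ℝ) + 1) = 2 * n / (n + 1) := by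
      field_simp; ring
    have h2n : (2 * (n:ℝ)) ≠ 0 := by rw [hnR]; positivity
    rw [hden, div_div_eq_mul_div, mul_comm (2*(n:ℝ)) ((n:ℝ)+1), mul_div_assoc,
      div_self h2n, mul_one]
    ring
  · -- not hamiltonian
    intro hham
    have hcard : Fintype.card V ≠ 1 := by rw [hcardV]; omega
    obtain ⟨a, p, hp⟩ := hham hcard
    have hlen := hp.length_eq
    rw [hcardV] at hlen
    have := (aux_walk_parity p).mpr rfl
    rw [hlen, Nat.even_iff] at this
    omega
end

section
/- Let G be a graph with a cycle C, let G − V(C) have a unique component H, and suppose C is a longest cycle with this property among cycles leaving components of order at most |V(H)|. Suppose every vertex of C not in W = N_C(V(H)) has more than n/(t+1) + t − 1 neighbors on C, where G is t-tough with t > 1, H is complete, and no D_{|V(H)|}-cycle exists in G. Then for any two distinct vertices u, v ∈ W, the distance from u to v along the cycle (in either direction) is at least t + 3. -/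
open SimpleGraph

/-- A `D_λ`-cycle: a cycle such that every component of `G − V(C)` has order
less than `λ`. -/
def IsDCycle {V : Type*} (G : SimpleGraph V) (lam : ℕ) {u : V} (c : G.Walk u u) : Prop :=
  c.IsCycle ∧
    ∀ K : (G.induce {x | x ∉ c.support}).ConnectedComponent, Nat.card K.supp < lam

/-- `c_λ(G − V(C))`: the number of components of `G − V(C)` of order at least `λ`. -/
noncomputable def bigComps {V : Type*} (G : SimpleGraph V) (lam : ℕ) {u : V}
    (c : G.Walk u u) : ℕ :=
  Nat.card {K : (G.induce {x | x ∉ c.support}).ConnectedComponent //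
    lam ≤ Nat.card K.supp}

/-- The distance from `x` to `y` along the oriented cycle `c`. -/
def cycDist {V : Type*} [DecidableEq V] {G : SimpleGraph V} {u : V}
    (c : G.Walk u u) (x y : V) : ℕ :=
  (c.support.idxOf y + c.length - c.support.idxOf x) % c.length

/-!
Suppose `u, w ∈ W` are closer than `t + 3` along `C`, and let `v` be the first vertex of `W` after
`u`. The arc strictly between `u` and `v` has fewer than `t + 2` vertices, none adjacent to `H`;
replacing it by a path through `H` gives a cycle missing only these arc vertices and part of `H`.
The arc vertices are then absorbed one component `σ` at a time, through a cycle vertex adjacent to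
`σ` whose successor is also adjacent to `σ`, or through two cycle vertices adjacent to `σ` with
adjacent successors. When neither is possible, those successors are independent and have no
neighbour in `σ`; toughness then bounds `n` from below, and the degree condition at a vertex of `σ`
forces `|σ| > t + 2`. The final cycle misses only a proper subset of `H`, so it is a
`D_λ`-cycle, which does not exist.
-/

namespace List

variable {α : Type*}

theorem exists_isRotated_cons {l : List α} {x : α} (hx : x ∈ l) : ∃ r, l ~r x :: r := by
  obtain ⟨s, r, rfl⟩ := append_of_mem hx
  exact ⟨r ++ s, by simpa using isRotated_append (l := s) (l' := x :: r)⟩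

theorem next_eq_of_isRotated [DecidableEq α] {l : List α} (hl : l.Nodup) {x y : α} {r : List α}
    (h : l ~r x :: y :: r) (hx : x ∈ l) : l.next x hx = y :=
  (isRotated_next_eq h hl hx).trans (next_cons_cons_eq _ _ _ _)

theorem idxOf_rotate [DecidableEq α] {l : List α} (hl : l.Nodup) {z : α} (hz : z ∈ l) {n : ℕ}
    (hn : n ≤ l.length) : (l.rotate n).idxOf z = (l.idxOf z + l.length - n) % l.length := by
  have hz' := idxOf_lt_length_of_mem hz
  have hk : (l.idxOf z + l.length - n) % l.length < (l.rotate n).length := by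
    rw [length_rotate]; exact Nat.mod_lt _ (by omega)
  have hget : (l.rotate n)[(l.idxOf z + l.length - n) % l.length]'hk = z := by
    rw [getElem_rotate]
    convert l.getElem_idxOf hz' using 2
    rw [Nat.mod_add_mod, Nat.sub_add_cancel (by omega), Nat.add_mod_right, Nat.mod_eq_of_lt hz']
  conv_lhs => rw [← hget]
  exact (nodup_rotate.mpr hl).idxOf_getElem _ hk

theorem exists_eq_append_cons_of_mem {p : α → Prop} {l : List α} {w : α} (hw : w ∈ l)
    (hpw : p w) : ∃ X v Q, l = X ++ v :: Q ∧ p v ∧ ∀ x ∈ X, ¬ p x := by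
  induction l with
  | nil => simp at hw
  | cons a l ih =>
    by_cases ha : p a
    · exact ⟨[], a, l, rfl, ha, by simp⟩
    obtain ⟨X, v, Q, rfl, hv, hX⟩ :=
      ih ((mem_cons.mp hw).resolve_left (by rintro rfl; exact ha hpw))
    exact ⟨a :: X, v, Q, rfl, hv, by simpa [ha] using hX⟩

end List

namespace SimpleGraph

variable {V : Type*} {G : SimpleGraph V}

/-- `l` lists the vertices of a cycle of `G` in cyclic order: unlike a closed walk it has no base
point, and `List.next` is the successor along the cycle. -/
structure IsCycleList (G : SimpleGraph V) (l : List V) : Prop where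
  nodup : l.Nodup
  three_le_length : 3 ≤ l.length
  chain : Cycle.Chain G.Adj (l : Cycle V)

namespace IsCycleList

variable {l : List V}

theorem ne_nil (hl : G.IsCycleList l) : l ≠ [] := by
  rintro rfl; exact absurd hl.three_le_length (by simp)

theorem of_isRotated {l' : List V} (hl : G.IsCycleList l) (h : l ~r l') : G.IsCycleList l' where
  nodup := h.nodup_iff.mp hl.nodup
  three_le_length := h.perm.length_eq ▸ hl.three_le_length
  chain := Cycle.coe_eq_coe.mpr h ▸ hl.chain

variable [DecidableEq V]

theorem exists_isRotated_next (hl : G.IsCycleList l) {x : V} (hx : x ∈ l) :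
    ∃ r, l ~r x :: l.next x hx :: r := by
  obtain ⟨r, hr⟩ := List.exists_isRotated_cons hx
  obtain ⟨y, r', rfl⟩ : ∃ y r', r = y :: r' := List.exists_cons_of_ne_nil <| by
    rintro rfl; have := hr.perm.length_eq; have := hl.three_le_length; simp_all
  exact ⟨r', List.next_eq_of_isRotated hl.nodup hr hx ▸ hr⟩

theorem next_injective (hl : G.IsCycleList l) {x y : V} (hx : x ∈ l) (hy : y ∈ l)
    (h : l.next x hx = l.next y hy) : x = y := by
  rw [← l.prev_next hl.nodup x hx, ← l.prev_next hl.nodup y hy]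
  simp only [h]

end IsCycleList

theorem Walk.isChain_cons_support_append {a x y b : V} {L : List V} (hax : G.Adj a x)
    (p : G.Walk x y) (hyb : G.Adj y b) (hL : (b :: L).IsChain G.Adj) :
    (a :: (p.support ++ b :: L)).IsChain G.Adj := by
  induction p generalizing a with
  | nil => exact (hL.cons_cons hyb).cons_cons hax
  | cons h p ih => exact (ih h hyb).cons_cons hax

namespace Walk.IsCycle

variable {v : V} {c : G.Walk v v}

theorem exists_dropLast_support_eq_cons (hc : c.IsCycle) : ∃ D, c.support.dropLast = v :: D := by
  obtain ⟨d, D, hD⟩ := List.exists_cons_of_ne_nil (l := c.support.dropLast) <|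
    List.ne_nil_of_length_pos (by have := hc.three_le_length; simp; omega)
  obtain rfl : d = v := by simpa [hD] using List.head_dropLast (xs := c.support) (by simp [hD])
  exact ⟨D, hD⟩

theorem support_eq_dropLast_append (c : G.Walk v v) : c.support = c.support.dropLast ++ [v] := by
  conv_lhs => rw [← List.dropLast_append_getLast c.support_ne_nil, c.getLast_support]

theorem mem_support_iff (hc : c.IsCycle) {z : V} : z ∈ c.support ↔ z ∈ c.support.dropLast := by
  obtain ⟨D, hD⟩ := hc.exists_dropLast_support_eq_cons
  conv_lhs => rw [support_eq_dropLast_append c]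
  simp [hD]
  tauto

theorem isCycleList (hc : c.IsCycle) : G.IsCycleList c.support.dropLast where
  nodup := hc.nodup_dropLast_support
  three_le_length := by simpa using hc.three_le_length
  chain := by
    obtain ⟨D, hD⟩ := hc.exists_dropLast_support_eq_cons
    have := c.isChain_adj_support
    rw [support_eq_dropLast_append c, hD] at this
    rw [hD, Cycle.chain_coe_cons]
    simpa using this

theorem cycDist_eq_idxOf_rotate [DecidableEq V] (hc : c.IsCycle) {x z : V} (hx : x ∈ c.support)
    (hz : z ∈ c.support) :
    cycDist c x z = (c.support.dropLast.rotate (c.support.dropLast.idxOf x)).idxOf z := by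
  rw [hc.mem_support_iff] at hx hz
  have hlen : c.length = c.support.dropLast.length := by simp
  rw [List.idxOf_rotate hc.nodup_dropLast_support hz (List.idxOf_le_length)]
  have hidx : ∀ y ∈ c.support.dropLast, c.support.idxOf y = c.support.dropLast.idxOf y := by
    intro y hy
    conv_lhs => rw [support_eq_dropLast_append c]
    exact List.idxOf_append_of_mem hy
  unfold cycDist
  rw [hidx x hx, hidx z hz, hlen]

end Walk.IsCycle

namespace IsCycleList

variable {l : List V}

theorem exists_isCycle (hl : G.IsCycleList l) :
    ∃ (x : V) (c : G.Walk x x), c.IsCycle ∧ ∀ z, z ∈ c.support ↔ z ∈ l := by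
  obtain ⟨x, y, r, rfl⟩ : ∃ x y r, l = x :: y :: r := by
    match l, hl.three_le_length with
    | x :: y :: r, _ => exact ⟨x, y, r, rfl⟩
  have hchain : (x :: y :: (r ++ [x])).IsChain G.Adj := hl.chain
  let q : G.Walk y x := (Walk.ofSupport _ (List.cons_ne_nil _ _) hchain.of_cons).copy rfl (by simp)
  have hq : q.support = y :: (r ++ [x]) :=
    (Walk.support_copy _ _ _).trans (Walk.support_ofSupport _ _)
  refine ⟨x, .cons hchain.rel q, ?_, fun z => by simp [hq]; tauto⟩
  rw [Walk.isCycle_iff_isPath_tail_and_le_length, Walk.isPath_def]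
  refine ⟨?_, ?_⟩
  · simpa [hq] using (List.perm_append_singleton x (y :: r)).nodup_iff.mpr hl.nodup
  · have h3 := hl.three_le_length
    have hlen := q.length_support
    simp only [hq, List.length_cons, List.length_append] at h3 hlen
    simp only [Walk.length_cons]
    omega

/-- The stretch `b :: L` of the cycle, which leads on to `a`, is closed up through `a` and the
path `p`; the remaining vertices `q` are dropped. -/
theorem replace (hl : G.IsCycleList l) {a b x y : V} {L q : List V}
    (hperm : (a :: b :: L ++ q).Perm l) (hchain : (b :: (L ++ [a])).IsChain G.Adj)
    (p : G.Walk x y) (hp : p.IsPath) (hdisj : ∀ z ∈ p.support, z ∉ l) (hax : G.Adj a x)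
    (hyb : G.Adj y b) :
    G.IsCycleList (a :: (p.support ++ b :: L)) ∧ (a :: (p.support ++ b :: L) ++ q).Nodup ∧
      ∀ z, z ∈ a :: (p.support ++ b :: L) ∨ z ∈ q ↔ z ∈ p.support ∨ z ∈ l := by
  have hperm' : (a :: (p.support ++ b :: L) ++ q).Perm (p.support ++ l) := by
    refine List.Perm.trans ?_ (hperm.append_left _)
    simpa using (List.perm_middle (l₁ := p.support) (a := a) (l₂ := b :: (L ++ q))).symm
  have hnodup : (a :: (p.support ++ b :: L) ++ q).Nodup :=
    hperm'.nodup_iff.mpr (List.nodup_append.mpr ⟨hp.support_nodup, hl.nodup,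
      fun z hz z' hz' h => hdisj z hz (h ▸ hz')⟩)
  refine ⟨⟨hnodup.sublist (List.sublist_append_left _ _), ?_, ?_⟩, hnodup, fun z => ?_⟩
  · simp [Walk.length_support]; omega
  · rw [Cycle.chain_coe_cons]
    simpa using Walk.isChain_cons_support_append hax p hyb hchain
  · simpa [or_assoc] using hperm'.mem_iff (a := z)

theorem replace_arc {u v x y : V} {X Q : List V}
    (hl : G.IsCycleList (u :: (X ++ v :: Q))) (p : G.Walk x y) (hp : p.IsPath)
    (hdisj : ∀ z ∈ p.support, z ∉ u :: (X ++ v :: Q)) (hux : G.Adj u x) (hyv : G.Adj y v) :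
    G.IsCycleList (u :: (p.support ++ v :: Q)) ∧ (∀ z ∈ X, z ∉ u :: (p.support ++ v :: Q)) ∧
      ∀ z ∉ u :: (p.support ++ v :: Q), z ∈ X ∨ z ∉ u :: (X ++ v :: Q) := by
  have hchain : (u :: (X ++ v :: Q ++ [u])).IsChain G.Adj := hl.chain
  obtain ⟨hl', hnodup, hmem⟩ := hl.replace (L := Q) (q := X)
    ((List.perm_append_comm (l₁ := v :: Q) (l₂ := X)).cons u)
    (hchain.infix ⟨u :: X, [], by simp⟩) p hp hdisj hux hyv
  refine ⟨hl', fun z hzX hz => List.disjoint_of_nodup_append hnodup hz hzX, fun z hz => ?_⟩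
  by_contra! h
  have := (hmem z).mpr (Or.inr h.2)
  tauto

variable [DecidableEq V]

theorem exists_insert_path (hl : G.IsCycleList l) {a x y : V} (ha : a ∈ l) (p : G.Walk x y)
    (hp : p.IsPath) (hdisj : ∀ z ∈ p.support, z ∉ l) (hax : G.Adj a x)
    (hy : G.Adj y (l.next a ha)) :
    ∃ l', G.IsCycleList l' ∧ ∀ z, z ∈ l' ↔ z ∈ p.support ∨ z ∈ l := by
  obtain ⟨r, hr⟩ := hl.exists_isRotated_next ha
  have hchain : (a :: l.next a ha :: (r ++ [a])).IsChain G.Adj := (hl.of_isRotated hr).chain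
  obtain ⟨hl', -, hmem⟩ := hl.replace (q := []) (by simpa using hr.perm.symm) hchain.of_cons p hp
    hdisj hax hy
  exact ⟨_, hl', by simpa using hmem⟩

/-- The chord between the successors of `a` and `b` lets the cycle run backwards from `b` to the
successor of `a`, so a path from `a` to `b` can be inserted. -/
theorem exists_insert_path_of_adj_next (hl : G.IsCycleList l) {a b x y : V} (ha : a ∈ l)
    (hb : b ∈ l) (hab : a ≠ b) (p : G.Walk x y) (hp : p.IsPath) (hdisj : ∀ z ∈ p.support, z ∉ l)
    (hax : G.Adj a x) (hyb : G.Adj y b) (hnext : G.Adj (l.next a ha) (l.next b hb)) :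
    ∃ l', G.IsCycleList l' ∧ ∀ z, z ∈ l' ↔ z ∈ p.support ∨ z ∈ l := by
  obtain ⟨r, hr⟩ := hl.exists_isRotated_next ha
  obtain ⟨P, Q, hPQ⟩ := List.append_of_mem (a := b) (l := l.next a ha :: r) <| by
    simpa [hab.symm] using hr.mem_iff.mp hb
  obtain ⟨b', Q', hQ⟩ := List.exists_cons_of_ne_nil (l := Q ++ [a]) (by simp)
  have hr' : l ~r a :: (P ++ b :: Q) := hPQ ▸ hr
  have hb' : l.next b hb = b' := by
    refine List.next_eq_of_isRotated (r := Q' ++ P) hl.nodup (hr'.trans ?_) hb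
    have : Q ++ a :: P = b' :: (Q' ++ P) := by simpa using congrArg (· ++ P) hQ
    simpa [this] using List.isRotated_append (l := a :: P) (l' := b :: Q)
  have hchain : (a :: ((P ++ [b]) ++ (Q ++ [a]))).IsChain G.Adj := by
    simpa using (hl.of_isRotated hr').chain
  obtain ⟨hPb, hQa, -⟩ := List.isChain_append.mp hchain.of_cons
  have hhead : (P ++ [b]).head? = some (l.next a ha) := by
    simpa using (congrArg List.head? hPQ).symm
  have hchain' : (b :: (P.reverse ++ Q ++ [a])).IsChain G.Adj := by
    have := List.isChain_append.mpr ⟨List.isChain_reverse.mpr (hPb.imp fun _ _ h => h.symm), hQa,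
      fun u hu w hw => ?_⟩
    · simpa using this
    rw [List.getLast?_reverse, hhead, Option.mem_some_iff] at hu
    rw [hQ, List.head?_cons, Option.mem_some_iff, ← hb'] at hw
    exact hu ▸ hw ▸ hnext
  have hperm : (a :: b :: (P.reverse ++ Q) ++ []).Perm l := by
    refine List.Perm.trans ?_ hr'.perm.symm
    simpa using (List.perm_middle.symm.trans ((List.reverse_perm P).append_right _)).cons a
  obtain ⟨hl', -, hmem⟩ := hl.replace hperm (by simpa using hchain') p hp hdisj hax hyb
  exact ⟨_, hl', by simpa using hmem⟩

end IsCycleList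

/-- Walking along the cycle from `u` towards `w ∈ W`, `X` is the stretch before the first vertex
`v'` of `W`, and the cycle is relisted from `u`. -/
theorem Walk.IsCycle.exists_arc [DecidableEq V] {v : V} {c : G.Walk v v} (hc : c.IsCycle)
    {W : Set V} {u w : V} (hu : u ∈ c.support) (hw : w ∈ c.support) (hwW : w ∈ W) (huw : u ≠ w) :
    ∃ X v' Q, G.IsCycleList (u :: (X ++ v' :: Q)) ∧
      (∀ z, z ∈ c.support ↔ z ∈ u :: (X ++ v' :: Q)) ∧ v' ∈ W ∧ (∀ x ∈ X, x ∉ W) ∧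
      X.length + 1 ≤ cycDist c u w := by
  set D := c.support.dropLast
  have hR : G.IsCycleList (D.rotate (D.idxOf u)) :=
    hc.isCycleList.of_isRotated (List.IsRotated.forall _ _).symm
  have hmem : ∀ z, z ∈ c.support ↔ z ∈ D.rotate (D.idxOf u) := by
    simp [D, hc.mem_support_iff]
  have hdist := hc.cycDist_eq_idxOf_rotate hu hw
  obtain ⟨u', R, hR'⟩ := List.exists_cons_of_ne_nil hR.ne_nil
  obtain rfl : u' = u := by
    have hlt : D.idxOf u < D.length := List.idxOf_lt_length_of_mem (hc.mem_support_iff.mp hu)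
    have := List.getElem_rotate D (D.idxOf u) 0 (by simp [hR'])
    simp only [hR', List.getElem_cons_zero, zero_add, Nat.mod_eq_of_lt hlt] at this
    rw [this, List.getElem_idxOf]
  rw [hR'] at hR hmem hdist
  obtain ⟨X, v', Q, rfl, hv', hX⟩ := List.exists_eq_append_cons_of_mem (p := (· ∈ W))
    ((List.mem_cons.mp ((hmem w).mp hw)).resolve_left huw.symm) hwW
  refine ⟨X, v', Q, hR, hmem, hv', hX, ?_⟩
  rw [hdist, List.idxOf_cons_ne _ huw, List.idxOf_append_of_notMem (fun h => hX w h hwW)]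
  omega

theorem Reachable.exists_isPath_induce {s : Set V} {x y : V} (hx : x ∈ s) (hy : y ∈ s)
    (h : (G.induce s).Reachable ⟨x, hx⟩ ⟨y, hy⟩) :
    ∃ p : G.Walk x y, p.IsPath ∧
      ∀ z ∈ p.support, ∃ hz : z ∈ s, (G.induce s).Reachable ⟨x, hx⟩ ⟨z, hz⟩ := by
  classical
  obtain ⟨q⟩ := h
  refine ⟨q.toPath.1.map (Embedding.induce s).toHom,
    q.toPath.2.map (Embedding.induce (G := G) s).injective, fun z hz => ?_⟩
  have hz' : z ∈ (q.toPath.1.map (Embedding.induce (G := G) s).toHom).support := hz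
  rw [Walk.support_map, List.mem_map] at hz'
  obtain ⟨z', hz', rfl⟩ := hz'
  exact ⟨z'.2, ⟨q.toPath.1.takeUntil z' hz'⟩⟩

theorem exists_closed_connected_subset [DecidableEq V] (Y : Finset V) {y : V} (hy : y ∈ Y) :
    ∃ σ ⊆ Y, y ∈ σ ∧ (∀ z ∈ σ, ∀ z' ∈ Y, G.Adj z z' → z' ∈ σ) ∧
      ∀ x ∈ σ, ∀ x' ∈ σ, ∃ p : G.Walk x x', p.IsPath ∧ ∀ z ∈ p.support, z ∈ σ := by
  classical
  let reach (z : V) : Prop :=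
    ∃ hz : z ∈ (Y : Set V), (G.induce (Y : Set V)).Reachable ⟨y, hy⟩ ⟨z, hz⟩
  refine ⟨Y.filter reach, Finset.filter_subset _ _, Finset.mem_filter.mpr ⟨hy, hy, .rfl⟩, ?_, ?_⟩
  · intro z hz z' hz' hadj
    obtain ⟨-, hz, hr⟩ := Finset.mem_filter.mp hz
    exact Finset.mem_filter.mpr ⟨hz', hz', hr.trans (Adj.reachable (by exact hadj))⟩
  · intro x hx x' hx'
    obtain ⟨-, hx, hrx⟩ := Finset.mem_filter.mp hx
    obtain ⟨-, hx', hrx'⟩ := Finset.mem_filter.mp hx'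
    obtain ⟨p, hp, hsub⟩ := Reachable.exists_isPath_induce hx hx' (hrx.symm.trans hrx')
    refine ⟨p, hp, fun z hz => ?_⟩
    obtain ⟨hz, hr⟩ := hsub z hz
    exact Finset.mem_filter.mpr ⟨hz, hz, hrx.trans hr⟩

theorem card_add_one_le_numComp [Finite V] {S B : Finset V} {a : V} (ha : a ∉ S) (haB : a ∉ B)
    (hBS : ∀ b ∈ B, b ∉ S) (hiso : ∀ b ∈ B, ∀ z, G.Adj b z → z ∈ S) :
    B.card + 1 ≤ numComp G S := by
  classical
  have hS : ∀ z ∈ insert a B, z ∈ (S : Set V)ᶜ := by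
    intro z hz
    rcases Finset.mem_insert.mp hz with rfl | hz
    exacts [ha, hBS z hz]
  have hstuck : ∀ b (hb : b ∈ B), ∀ z (hz : z ∈ (S : Set V)ᶜ),
      (G.induce (S : Set V)ᶜ).Reachable ⟨b, hBS b hb⟩ ⟨z, hz⟩ → b = z := by
    rintro b hb z hz ⟨p⟩
    cases p with
    | nil => rfl
    | @cons _ w _ h _ => exact absurd (hiso b hb _ h) w.2
  let f (z : (insert a B : Finset V)) : (G.induce (S : Set V)ᶜ).ConnectedComponent :=
    (G.induce _).connectedComponentMk ⟨z, hS z z.2⟩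
  have hf : Function.Injective f := by
    rintro ⟨z₁, h₁⟩ ⟨z₂, h₂⟩ h
    have hr := ConnectedComponent.exact h
    rw [Subtype.mk.injEq]
    rcases Finset.mem_insert.mp h₁ with rfl | h₁
    · rcases Finset.mem_insert.mp h₂ with rfl | h₂
      exacts [rfl, (hstuck _ h₂ _ _ hr.symm).symm]
    · exact hstuck _ h₁ _ _ hr
  have := Nat.card_le_card_of_injective f hf
  rwa [Nat.card_eq_fintype_card, Fintype.card_coe, Finset.card_insert_of_notMem haB] at this

theorem Tough.mul_card_add_one_le [Fintype V] [DecidableEq V] {t : ℝ} (h : Tough t G)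
    (ht : 0 ≤ t) {σ B : Finset V} {a : V} (ha : a ∈ σ) (hB : B.Nonempty) (hσB : Disjoint σ B)
    (hiso : ∀ b ∈ B, ∀ z, G.Adj b z → z ∉ σ ∧ z ∉ B) :
    t * (B.card + 1) ≤ Fintype.card V - σ.card - B.card := by
  have hcount : B.card + 1 ≤ numComp G ↑(σ ∪ B)ᶜ :=
    card_add_one_le_numComp (by simp [ha]) (Finset.disjoint_left.mp hσB ha)
      (fun b hb => by simp [hb]) (fun b hb z hz => by simpa using hiso b hb z hz)
  have hcard : (((σ ∪ B)ᶜ).card : ℝ) = Fintype.card V - σ.card - B.card := by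
    rw [Finset.card_compl, Finset.card_union_of_disjoint hσB,
      Nat.cast_sub (by simpa [Finset.card_union_of_disjoint hσB] using
        Finset.card_le_univ (σ ∪ B))]
    push_cast; ring
  calc t * (B.card + 1) ≤ t * numComp G ↑(σ ∪ B)ᶜ := by gcongr; exact_mod_cast hcount
    _ ≤ _ := h _ (by have := hB.card_pos; omega)
    _ = _ := hcard

namespace IsCycleList

variable [DecidableEq V] {M : List V} {σ : Finset V}

/-- `B` consists of the successors of the vertices of `U`, or of one vertex of `M` if `U` is
empty. -/
theorem exists_isolated_successors (hM : G.IsCycleList M) (hσM : ∀ z ∈ σ, z ∉ M)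
    (hnext : ∀ a (ha : a ∈ M), ∀ x ∈ σ, G.Adj a x → ∀ x' ∈ σ, ¬ G.Adj (M.next a ha) x')
    (hnext₂ : ∀ a (ha : a ∈ M) b (hb : b ∈ M), a ≠ b → ∀ x ∈ σ, G.Adj a x → ∀ x' ∈ σ,
      G.Adj b x' → ¬ G.Adj (M.next a ha) (M.next b hb))
    (U : Finset V) (hU : ∀ a, a ∈ U ↔ a ∈ M ∧ ∃ x ∈ σ, G.Adj a x) :
    ∃ B : Finset V, B.Nonempty ∧ U.card ≤ B.card ∧ Disjoint σ B ∧
      ∀ b ∈ B, ∀ z, G.Adj b z → z ∉ σ ∧ z ∉ B := by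
  rcases U.eq_empty_or_nonempty with hU₀ | hUne
  · obtain ⟨m, hm⟩ := List.exists_mem_of_ne_nil M hM.ne_nil
    refine ⟨{m}, Finset.singleton_nonempty m, by simp [hU₀],
      Finset.disjoint_singleton_right.mpr fun h => hσM m h hm, ?_⟩
    intro b hb z hz
    obtain rfl := Finset.mem_singleton.mp hb
    refine ⟨fun hzσ => ?_, by simpa using hz.ne.symm⟩
    simpa [hU₀] using (hU b).mpr ⟨hm, z, hzσ, hz⟩
  let f (a : U) : V := M.next a ((hU a).mp a.2).1
  have hf : Function.Injective f := fun a b h => Subtype.ext (hM.next_injective _ _ h)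
  refine ⟨U.attach.image f, hUne.attach.image f, by
    rw [Finset.card_image_of_injective _ hf, Finset.card_attach], ?_, ?_⟩
  · refine Finset.disjoint_left.mpr fun z hzσ hzB => ?_
    obtain ⟨a, -, rfl⟩ := Finset.mem_image.mp hzB
    exact hσM _ hzσ (List.next_mem _ _ _)
  · intro b hb z hz
    obtain ⟨a, -, rfl⟩ := Finset.mem_image.mp hb
    obtain ⟨ha, x, hx, hax⟩ := (hU a).mp a.2
    refine ⟨fun hzσ => hnext a ha x hx hax z hzσ hz, fun hzB => ?_⟩
    obtain ⟨a', -, rfl⟩ := Finset.mem_image.mp hzB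
    obtain ⟨ha', x', hx', hax'⟩ := (hU a').mp a'.2
    by_cases haa' : (a : V) = a'
    · exact hz.ne (congrArg f (Subtype.ext haa'))
    · exact hnext₂ a ha a' ha' haa' x hx hax x' hx' hax' hz

variable [Fintype V]

/-- With `U` the vertices of `M` adjacent to `σ`, toughness applied to `σ` and the isolated
successors gives `n ≥ (t + 1)|U| + t + |σ|`, while `|N| ≤ |U| + |σ| - 1`; together with the
degree condition this forces `|σ| > t + 2`. -/
theorem false_of_not_adj_next {t : ℝ} (ht : 1 < t) (htough : Tough t G) (hM : G.IsCycleList M)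
    (hσM : ∀ z ∈ σ, z ∉ M) (hσ : (σ.card : ℝ) < t + 2) {y : V} (hy : y ∈ σ)
    (hNy : ∀ z, G.Adj y z → z ∉ M → z ∈ σ) {N : Set V} (hN : ∀ z ∈ N, G.Adj y z)
    (hdeg : (Fintype.card V : ℝ) / (t + 1) + t - 1 < Nat.card N)
    (hnext : ∀ a (ha : a ∈ M), ∀ x ∈ σ, G.Adj a x → ∀ x' ∈ σ, ¬ G.Adj (M.next a ha) x')
    (hnext₂ : ∀ a (ha : a ∈ M) b (hb : b ∈ M), a ≠ b → ∀ x ∈ σ, G.Adj a x → ∀ x' ∈ σ,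
      G.Adj b x' → ¬ G.Adj (M.next a ha) (M.next b hb)) : False := by
  classical
  set U := M.toFinset.filter fun a => ∃ x ∈ σ, G.Adj a x
  have hdegU : Nat.card N + 1 ≤ U.card + σ.card := by
    have hsub : N ⊆ ↑(U ∪ σ.erase y) := by
      intro z hz
      replace hz := hN z hz
      by_cases hzM : z ∈ M
      · simpa [U, hzM] using Or.inl ⟨y, hy, hz.symm⟩
      · simpa using Or.inr ⟨hNy z hz hzM, hz.ne.symm⟩
    have := Set.ncard_le_ncard hsub
    rw [Set.ncard_coe_finset, ← Nat.card_coe_set_eq] at this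
    have := Finset.card_union_le U (σ.erase y)
    have := Finset.card_erase_of_mem hy
    have := Finset.card_pos.mpr ⟨y, hy⟩
    omega
  obtain ⟨B, hB, hUB, hσB, hiso⟩ := hM.exists_isolated_successors hσM hnext hnext₂ U (by simp [U])
  have htB := htough.mul_card_add_one_le (by linarith) hy hB hσB hiso
  have hdegU' : (Nat.card N : ℝ) + 1 ≤ U.card + σ.card := by exact_mod_cast hdegU
  have hUB' : (U.card : ℝ) ≤ B.card := by exact_mod_cast hUB
  have hn := div_mul_cancel₀ (Fintype.card V : ℝ) (by linarith : t + 1 ≠ 0)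
  nlinarith [mul_lt_mul_of_pos_right hdeg (by linarith : (0 : ℝ) < t + 1)]

/-- Induction on `Y`: a path through a component `σ` of `Y` is inserted next to a successor or
across a chord between successors; if neither is possible, `false_of_not_adj_next` applies. -/
theorem exists_extension_compl_subset {t : ℝ} (ht : 1 < t) (htough : Tough t G) {S : Set V}
    (hdeg : ∀ x ∈ S, (∀ a ∉ S, ¬ G.Adj x a) →
      (Fintype.card V : ℝ) / (t + 1) + t - 1 < Nat.card {y | y ∈ S ∧ G.Adj x y})
    (Y : Finset V) (hY : (Y.card : ℝ) < t + 2) (hYS : ∀ y ∈ Y, y ∈ S ∧ ∀ a ∉ S, ¬ G.Adj y a)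
    {M : List V} (hM : G.IsCycleList M) (hYM : ∀ y ∈ Y, y ∉ M) (hcov : ∀ z ∉ M, z ∈ Y ∨ z ∉ S) :
    ∃ M', G.IsCycleList M' ∧ M ⊆ M' ∧ ∀ z ∉ M', z ∉ S := by
  induction Y using Finset.strongInduction generalizing M with
  | H Y ih =>
  rcases Y.eq_empty_or_nonempty with rfl | ⟨y, hy⟩
  · exact ⟨M, hM, List.Subset.refl _, fun z hz => by simpa using hcov z hz⟩
  obtain ⟨σ, hσY, hyσ, hσclosed, hσpath⟩ := exists_closed_connected_subset (G := G) Y hy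
  have hσM : ∀ z ∈ σ, z ∉ M := fun z hz => hYM z (hσY hz)
  by_contra hfail
  have grow : ∀ x ∈ σ, ∀ x' ∈ σ, (∀ p : G.Walk x x', p.IsPath → (∀ z ∈ p.support, z ∉ M) →
      ∃ M₁, G.IsCycleList M₁ ∧ ∀ z, z ∈ M₁ ↔ z ∈ p.support ∨ z ∈ M) → False := by
    intro x hx x' hx' hinsert
    obtain ⟨p, hp, hpσ⟩ := hσpath x hx x' hx'
    obtain ⟨M₁, hM₁, hmem⟩ := hinsert p hp fun z hz => hσM z (hpσ z hz)
    have hpY : p.support.toFinset ⊆ Y := fun z hz => hσY (hpσ z (List.mem_toFinset.mp hz))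
    obtain ⟨M', hM', hsub, hA⟩ := ih (Y \ p.support.toFinset)
      (Finset.sdiff_ssubset hpY ⟨x, by simp⟩)
      (lt_of_le_of_lt (by exact_mod_cast Finset.card_le_card Finset.sdiff_subset) hY)
      (fun z hz => hYS z (Finset.mem_sdiff.mp hz).1) hM₁
      (fun z hz hzM => by
        have := Finset.mem_sdiff.mp hz
        rcases (hmem z).mp hzM with h | h
        exacts [this.2 (List.mem_toFinset.mpr h), hYM z this.1 h])
      (fun z hz => by
        rw [hmem, not_or] at hz
        rcases hcov z hz.2 with h | h
        exacts [Or.inl (Finset.mem_sdiff.mpr ⟨h, by simpa using hz.1⟩), Or.inr h])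
    exact hfail ⟨M', hM', fun z hz => hsub ((hmem z).mpr (Or.inr hz)), hA⟩
  refine hM.false_of_not_adj_next ht htough hσM
    (lt_of_le_of_lt (by exact_mod_cast Finset.card_le_card hσY) hY) hyσ
    (fun z hz hzM => (hcov z hzM).elim (hσclosed y hyσ z · hz)
      (fun hzS => absurd hz ((hYS y hy).2 z hzS)))
    (fun z hz => hz.2) (hdeg y (hYS y hy).1 (hYS y hy).2) ?_ ?_
  · intro a ha x hx hax x' hx' h
    exact grow x hx x' hx' fun p hp hdisj => hM.exists_insert_path ha p hp hdisj hax h.symm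
  · intro a ha b hb hab x hx hax x' hx' hbx' h
    exact grow x hx x' hx' fun p hp hdisj =>
      hM.exists_insert_path_of_adj_next ha hb hab p hp hdisj hax hbx'.symm h

end IsCycleList

theorem isDCycle_of_compl_ssubset [Finite V] {x : V} {c : G.Walk x x} (hc : c.IsCycle)
    {H : Set V} (hsub : {z | z ∉ c.support} ⊂ H) : IsDCycle G (Nat.card H) c := by
  refine ⟨hc, fun K => ?_⟩
  calc Nat.card K.supp ≤ Nat.card {z | z ∉ c.support} :=
        Nat.card_le_card_of_injective (fun z => z.1) fun _ _ h => Subtype.ext h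
    _ < Nat.card H := by
      rw [Nat.card_coe_set_eq, Nat.card_coe_set_eq]
      exact Set.ncard_lt_ncard hsub

theorem IsCycleList.exists_isDCycle [Finite V] {M : List V} (hM : G.IsCycleList M) {H : Set V}
    {h : V} (hH : h ∈ H) (hhM : h ∈ M) (hcompl : ∀ z ∉ M, z ∈ H) :
    ∃ (x : V) (c : G.Walk x x), IsDCycle G (Nat.card H) c := by
  obtain ⟨x, c, hc, hmem⟩ := hM.exists_isCycle
  refine ⟨x, c, isDCycle_of_compl_ssubset hc ⟨fun z hz => hcompl z ((hmem z).not.mp hz), ?_⟩⟩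
  exact fun hsub => hsub hH ((hmem h).mpr hhM)

end SimpleGraph

theorem neighbours_far_apart_general {V : Type*} [Fintype V] [DecidableEq V]
    (t : ℝ) (ht : 1 < t) (G : SimpleGraph V) (htough : Tough t G)
    (v0 : V) (c : G.Walk v0 v0) (hcyc : c.IsCycle)
    (Hset : Set V) (hHset : Hset = {x | x ∉ c.support})
    (hHconn : (G.induce Hset).Connected)
    (lam : ℕ) (hlam : lam = Nat.card Hset)
    (hnoD : ∀ (w : V) (c' : G.Walk w w), ¬ IsDCycle G lam c')
    (W : Set V) (hW : W = {x | x ∈ c.support ∧ ∃ y ∈ Hset, G.Adj x y})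
    (hdeg : ∀ x ∈ c.support, x ∉ W →
      (Fintype.card V : ℝ) / (t + 1) + t - 1 <
        (Nat.card {y : V | y ∈ c.support ∧ G.Adj x y} : ℝ)) :
    ∀ u ∈ W, ∀ w ∈ W, u ≠ w → t + 3 ≤ (cycDist c u w : ℝ) := by
  subst hHset hW hlam
  intro u hu w hw huw
  by_contra! hclose
  obtain ⟨X, v, Q, hR, hmemR, hv, hXW, hXd⟩ := hcyc.exists_arc hu.1 hw.1 hw huw
  obtain ⟨-, hᵤ, hhᵤ, hadjᵤ⟩ := hu
  obtain ⟨-, hᵥ, hhᵥ, hadjᵥ⟩ := hv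
  obtain ⟨π, hπ, hπH⟩ := Reachable.exists_isPath_induce hhᵤ hhᵥ (hHconn.preconnected _ _)
  obtain ⟨hM₀, hXM₀, hcompl₀⟩ := hR.replace_arc π hπ
    (fun z hz => (hmemR z).not.mp (hπH z hz).1) hadjᵤ hadjᵥ.symm
  have hX : (X.toFinset.card : ℝ) < t + 2 := by
    have : (X.toFinset.card : ℝ) + 1 ≤ cycDist c u w := by
      exact_mod_cast (Nat.add_le_add_right X.toFinset_card_le 1).trans hXd
    linarith
  obtain ⟨M, hM, hM₀M, hMc⟩ := hM₀.exists_extension_compl_subset ht htough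
    (S := {x | x ∈ c.support}) (fun x hx hxS => hdeg x hx fun ⟨_, a, ha, hxa⟩ => hxS a ha hxa)
    X.toFinset hX
    (fun x hx => by
      rw [List.mem_toFinset] at hx
      have hxc : x ∈ c.support := (hmemR x).mpr (by simp [hx])
      exact ⟨hxc, fun a ha hxa => hXW x hx ⟨hxc, a, ha, hxa⟩⟩)
    (fun x hx => hXM₀ x (List.mem_toFinset.mp hx))
    (fun z hz => (hcompl₀ z hz).imp List.mem_toFinset.mpr (hmemR z).not.mpr)
  obtain ⟨x₀, c', hc'⟩ := hM.exists_isDCycle hhᵤ (hM₀M (by simp)) hMc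
  exact hnoD x₀ c' hc'

/-- Claim 4: in the setting of the main proof, any two neighbours of  on the
cycle  are at cycle-distance at least  in either direction. -/
theorem neighbours_far_apart {V : Type*} [Fintype V] [DecidableEq V]
    (t : ℝ) (ht : 1 < t) (G : SimpleGraph V) (htough : Tough t G)
    (v0 : V) (c : G.Walk v0 v0) (hcyc : c.IsCycle)
    (Hset : Set V) (hHset : Hset = {x | x ∉ c.support})
    (hHne : Hset.Nonempty) (hHconn : (G.induce Hset).Connected)
    (hHcomplete : ∀ x ∈ Hset, ∀ y ∈ Hset, x ≠ y → G.Adj x y)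
    (lam : ℕ) (hlam : lam = Nat.card Hset)
    (hnoD : ∀ (w : V) (c' : G.Walk w w), ¬ IsDCycle G lam c')
    (hDc : IsDCycle G (lam + 1) c)
    (hminbig : ∀ (w : V) (c' : G.Walk w w), IsDCycle G (lam + 1) c' →
      bigComps G lam c ≤ bigComps G lam c')
    (hlongest : ∀ (w : V) (c' : G.Walk w w), IsDCycle G (lam + 1) c' →
      bigComps G lam c' = bigComps G lam c → c'.length ≤ c.length)
    (W : Set V) (hW : W = {x | x ∈ c.support ∧ ∃ y ∈ Hset, G.Adj x y})
    (hdeg : ∀ x ∈ c.support, x ∉ W →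
      (Fintype.card V : ℝ) / (t + 1) + t - 1 <
        (Nat.card {y : V | y ∈ c.support ∧ G.Adj x y} : ℝ)) :
    ∀ u ∈ W, ∀ w ∈ W, u ≠ w → t + 3 ≤ (cycDist c u w : ℝ) :=
  neighbours_far_apart_general t ht G htough v0 c hcyc Hset hHset hHconn lam hlam hnoD W hW hdeg
end

section
/- Let t > 1, let G be a t-tough n-vertex graph, let C be a cycle of G whose complement's unique component H is complete of order λ, with W = N_C(V(H)) of size ω, such that any two vertices of W are at cycle-distance at least t + 3, each vertex u ∈ W has a set L_u⁺ of its t + 2 consecutive successors on C, and these sets L_u⁺ (u ∈ W) together with H are pairwise remote (no edges between any two). Then ω ≤ n/(2(t+1)) − 1/2. -/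
open SimpleGraph

/-!
Delete every vertex outside `H` and the sets `L_u⁺`. What remains splits into the `ω + 1` pairwise
remote pieces `H` and `L_u⁺`, each a union of components, so `t`-toughness gives
`t (ω + 1) ≤ n − λ − ω (t + 2)`, and `λ ≥ 1` turns this into the bound. The count needs `ω ≥ 1`:
were `W` empty, `H` would be remote from the cycle, and a `t`-tough graph (`t > 0`) is connected.
-/

namespace SimpleGraph

variable {V : Type*} {G : SimpleGraph V}

def Remote (G : SimpleGraph V) (A B : Set V) : Prop :=
  Disjoint A B ∧ ∀ a ∈ A, ∀ b ∈ B, ¬ G.Adj a b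

theorem Remote.symm {A B : Set V} (h : Remote G A B) : Remote G B A :=
  ⟨h.1.symm, fun b hb a ha hab => h.2 a ha b hb hab.symm⟩

theorem Reachable.mem_of_adj_closed {P : Set V} (hP : ∀ x y, G.Adj x y → x ∈ P → y ∈ P)
    {a b : V} (h : G.Reachable a b) (ha : a ∈ P) : b ∈ P := by
  replace h := (reachable_iff_reflTransGen a b).1 h
  induction h with
  | refl => exact ha
  | tail _ hxy ih => exact hP _ _ hxy ih

theorem card_le_card_connectedComponent_induce_iUnion [Finite V] {ι : Type*}
    {A : ι → Set V} (hne : ∀ i, (A i).Nonempty)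
    (hrem : Pairwise fun i j => Remote G (A i) (A j)) :
    Nat.card ι ≤ Nat.card (G.induce (⋃ i, A i)).ConnectedComponent := by
  choose p hp using hne
  let q : ι → ⋃ i, A i := fun i => ⟨p i, Set.mem_iUnion_of_mem i (hp i)⟩
  refine Nat.card_le_card_of_injective (fun i => (G.induce _).connectedComponentMk (q i)) ?_
  intro i j hij
  have hclosed : ∀ x y : ⋃ k, A k, (G.induce _).Adj x y → (x : V) ∈ A i → (y : V) ∈ A i := by
    rintro x ⟨y, hy⟩ hxy hx
    obtain ⟨k, hk⟩ := Set.mem_iUnion.1 hy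
    by_cases hki : k = i
    · exact hki ▸ hk
    · exact absurd hxy ((hrem (Ne.symm hki)).2 x hx y hk)
  have hpj : p j ∈ A i :=
    (ConnectedComponent.exact hij).mem_of_adj_closed (P := Subtype.val ⁻¹' A i) hclosed (hp i)
  by_contra hne
  exact Set.disjoint_left.1 (hrem hne).1 hpj (hp j)

end SimpleGraph

section

variable {V : Type*} {G : SimpleGraph V}

theorem numComp_compl_eq (S : Set V) :
    numComp G Sᶜ = Nat.card (G.induce S).ConnectedComponent := by
  rw [numComp, compl_compl]

namespace Tough

variable [Fintype V] {t : ℝ}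

theorem exists_adj_of_nonempty (ht : 0 < t) (hG : Tough t G) {s : Set V} (hs : s.Nonempty)
    (hsc : sᶜ.Nonempty) : ∃ x ∈ s, ∃ y ∉ s, G.Adj x y := by
  by_contra! hno
  let A : Bool → Set V := fun b => cond b s sᶜ
  have hrem : Pairwise fun i j => Remote G (A i) (A j) := by
    have hst : Remote G s sᶜ := ⟨disjoint_compl_right, fun x hx y hy => hno x hx y hy⟩
    rintro (_ | _) (_ | _) hij
    exacts [absurd rfl hij, hst.symm, hst, absurd rfl hij]
  have hunion : (⋃ b, A b)ᶜ = ((∅ : Finset V) : Set V) := by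
    rw [← Set.union_eq_iUnion, Set.union_compl_self, Set.compl_univ, Finset.coe_empty]
  have h2 : 2 ≤ numComp G ↑(∅ : Finset V) := by
    rw [← hunion, numComp_compl_eq]
    simpa using card_le_card_connectedComponent_induce_iUnion (G := G) (A := A)
      (by rintro (_ | _) <;> assumption) hrem
  have hcut := hG ∅ h2
  have h2' : (2 : ℝ) ≤ numComp G ↑(∅ : Finset V) := by exact_mod_cast h2
  simp only [Finset.card_empty, Nat.cast_zero] at hcut
  nlinarith

theorem mul_card_add_sum_ncard_le (ht : 0 ≤ t) (hG : Tough t G) {ι : Type*} [Fintype ι]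
    (hι : 2 ≤ Fintype.card ι) {A : ι → Set V} (hne : ∀ i, (A i).Nonempty)
    (hrem : Pairwise fun i j => Remote G (A i) (A j)) :
    t * Fintype.card ι + ∑ i, (A i).ncard ≤ Fintype.card V := by
  classical
  set S : Finset V := (⋃ i, A i)ᶜ.toFinset
  have hcomp : Fintype.card ι ≤ numComp G S := by
    rw [Set.coe_toFinset, numComp_compl_eq, ← Nat.card_eq_fintype_card]
    exact card_le_card_connectedComponent_induce_iUnion hne hrem
  have htough := hG S (hι.trans hcomp)
  have hunion : (⋃ i, A i).ncard = ∑ i, (A i).ncard := by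
    rw [Set.ncard_iUnion_of_finite (fun i => Set.toFinite _) fun i j hij => (hrem hij).1,
      finsum_eq_sum_of_fintype]
  have hS : S.card + (⋃ i, A i).ncard = Fintype.card V := by
    rw [Set.toFinset_card, ← Nat.card_eq_fintype_card, Nat.card_coe_set_eq, add_comm,
      Set.ncard_add_ncard_compl]
    exact Nat.card_eq_fintype_card
  have hS' : (S.card : ℝ) + (⋃ i, A i).ncard = Fintype.card V := by exact_mod_cast hS
  rw [hunion] at hS'
  push_cast at hS'
  have hmul : t * Fintype.card ι ≤ t * numComp G S := by gcongr
  push_cast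
  linarith

end Tough

end

theorem W_size_bound_general {V : Type*} [Fintype V]
    (t : ℝ) (ht : 1 < t) (G : SimpleGraph V) (htough : Tough t G)
    (v0 : V) (c : G.Walk v0 v0)
    (Hset : Set V) (hHset : Hset = {x | x ∉ c.support})
    (hHne : Hset.Nonempty)
    (W : Set V) (hW : W = {x | x ∈ c.support ∧ ∃ y ∈ Hset, G.Adj x y})
    (L : V → Set V)
    (hLcard : ∀ u ∈ W, (Nat.card (L u) : ℝ) = t + 2)
    (hLremote : ∀ u ∈ W, ∀ w ∈ W, u ≠ w →
      Disjoint (L u) (L w) ∧ ∀ a ∈ L u, ∀ b ∈ L w, ¬ G.Adj a b)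
    (hLHremote : ∀ u ∈ W,
      Disjoint (L u) Hset ∧ ∀ a ∈ L u, ∀ b ∈ Hset, ¬ G.Adj a b) :
    (Nat.card W : ℝ) ≤ (Fintype.card V : ℝ) / (2 * (t + 1)) - 1 / 2 := by
  classical
  have hWne : W.Nonempty := by
    obtain ⟨x, hx, y, hy, hxy⟩ :=
      htough.exists_adj_of_nonempty (by linarith) hHne ⟨v0, by simp [hHset]⟩
    exact ⟨y, hW ▸ ⟨by simpa [hHset] using hy, x, hx, hxy.symm⟩⟩
  have hLncard : ∀ u : W, ((L u).ncard : ℝ) = t + 2 := fun u => by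
    rw [← Nat.card_coe_set_eq]; exact hLcard u u.2
  let A : Option W → Set V := fun o => o.elim Hset fun u => L u
  have hne : ∀ o, (A o).Nonempty := by
    rintro (_ | u)
    · exact hHne
    · refine Set.nonempty_of_ncard_ne_zero fun (h : (L u).ncard = 0) => ?_
      have := hLncard u
      rw [h, Nat.cast_zero] at this
      linarith
  have hrem : Pairwise fun i j => Remote G (A i) (A j) := by
    rintro (_ | ⟨u, hu⟩) (_ | ⟨w, hw⟩) hij
    · exact absurd rfl hij
    · exact Remote.symm (hLHremote w hw)
    · exact hLHremote u hu
    · exact hLremote u hu w hw fun h => hij (by subst h; rfl)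
  have hcount := htough.mul_card_add_sum_ncard_le (by linarith) (ι := Option W)
    (by simpa using Fintype.card_pos_iff.2 hWne.to_subtype) hne hrem
  simp only [Fintype.card_option, Fintype.sum_option, A, Option.elim] at hcount
  push_cast [hLncard] at hcount
  have hH : (1 : ℝ) ≤ Hset.ncard := by exact_mod_cast (hHne.ncard_pos (Set.toFinite _))
  rw [Finset.sum_const, Finset.card_univ, nsmul_eq_mul, ← Nat.card_eq_fintype_card] at hcount
  rw [le_sub_iff_add_le, le_div_iff₀ (by positivity)]
  linarith

/-- Claim 5: with the sets `L_u⁺` of the `t+2` consecutive successors of the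
neighbours of `H` on `C` pairwise remote and remote from `H`, one gets
`ω ≤ n/(2(t+1)) − 1/2`. -/
theorem W_size_bound {V : Type*} [Fintype V] [DecidableEq V]
    (t : ℝ) (ht : 1 < t) (G : SimpleGraph V) (htough : Tough t G)
    (v0 : V) (c : G.Walk v0 v0) (hcyc : c.IsCycle)
    (Hset : Set V) (hHset : Hset = {x | x ∉ c.support})
    (hHne : Hset.Nonempty) (hHconn : (G.induce Hset).Connected)
    (hHcomplete : ∀ x ∈ Hset, ∀ y ∈ Hset, x ≠ y → G.Adj x y)
    (lam : ℕ) (hlam : lam = Nat.card Hset)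
    (W : Set V) (hW : W = {x | x ∈ c.support ∧ ∃ y ∈ Hset, G.Adj x y})
    (hfar : ∀ u ∈ W, ∀ w ∈ W, u ≠ w → t + 3 ≤ (cycDist c u w : ℝ))
    (L : V → Set V)
    (hL : ∀ u ∈ W, L u = {y | y ∈ c.support ∧
      1 ≤ cycDist c u y ∧ (cycDist c u y : ℝ) ≤ t + 2})
    (hLcard : ∀ u ∈ W, (Nat.card (L u) : ℝ) = t + 2)
    (hLremote : ∀ u ∈ W, ∀ w ∈ W, u ≠ w →
      Disjoint (L u) (L w) ∧ ∀ a ∈ L u, ∀ b ∈ L w, ¬ G.Adj a b)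
    (hLHremote : ∀ u ∈ W,
      Disjoint (L u) Hset ∧ ∀ a ∈ L u, ∀ b ∈ Hset, ¬ G.Adj a b) :
    (Nat.card W : ℝ) ≤ (Fintype.card V : ℝ) / (2 * (t + 1)) - 1 / 2 :=
  W_size_bound_general t ht G htough v0 c Hset hHset hHne W hW L hLcard hLremote hLHremote
end

section
/- Let t > 1 and n ≥ 4t(t+1), and let ω, λ be reals with ω ≥ 2t, ω ≤ n/(2(t+1)) − 1/2, λ ≤ n/(2t+1) − t, and n ≥ (λ + t)(ω + 1). Then λ + ω ≤ 3n/(4(t+1)) + t. -/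
/-- Claim 6: a purely arithmetic optimization. -/
theorem claim6_arith (t n ω lam : ℝ) (ht : 1 < t) (hn : 4 * t * (t + 1) ≤ n)
    (hω1 : 2 * t ≤ ω) (hω2 : ω ≤ n / (2 * (t + 1)) - 1 / 2)
    (hlam : lam ≤ n / (2 * t + 1) - t) (hprod : (lam + t) * (ω + 1) ≤ n) :
    lam + ω ≤ 3 * n / (4 * (t + 1)) + t := by
  have ht1 : (0:ℝ) < t + 1 := by linarith
  have ht2 : (0:ℝ) < 2 * t + 1 := by linarith
  have hω2' : 2 * (t + 1) * (ω + 1/2) ≤ n := by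
    have h := (le_div_iff₀ (by positivity : (0:ℝ) < 2 * (t+1))).mp
      (by linarith : ω + 1/2 ≤ n / (2 * (t + 1)))
    linarith
  have hlam' : (lam + t) * (2 * t + 1) ≤ n := by
    have h := (le_div_iff₀ ht2).mp (by linarith : lam + t ≤ n / (2 * t + 1))
    linarith
  rw [div_add' _ _ _ (by positivity : (4:ℝ) * (t+1) ≠ 0), le_div_iff₀ (by positivity)]
  nlinarith [mul_nonneg (by linarith : (0:ℝ) ≤ ω - 2*t) (by linarith : 0 ≤ n - 2*(t+1)*(ω+1/2)),
    sq_nonneg (ω - 2*t), sq_nonneg (ω + 1 - 2*t), mul_pos ht1 ht2,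
    mul_nonneg (by linarith : (0:ℝ) ≤ ω - 2*t) (by linarith : (0:ℝ) ≤ ω - 2*t)]
end
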